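/- Let 1 ≤ k ≤ n. For every κ ∈ Γ_k one has Σ_{i=1}^{n} ∂/∂κ_i [σ_k(κ)/σ_{k−1}(κ)] ≤ n − k + 1; explicitly, ((n−k+1)σ_{k−1}(κ)² − (n−k+2)σ_k(κ)σ_{k−2}(κ)) / σ_{k−1}(κ)² ≤ n − k + 1. -/
import Mathlib


/-- The `m`-th elementary symmetric polynomial of `lam : Fin n → ℝ`. -/
noncomputable def esymm (n m : ℕ) (lam : Fin n → ℝ) : ℝ :=
  ∑ s ∈ Finset.univ.powersetCard m, ∏ i ∈ s, lam i

/-- `σ_{l-1}` with the convention `σ_{-1} = 0`. -/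
noncomputable def esymmPred (n l : ℕ) (lam : Fin n → ℝ) : ℝ :=
  if l = 0 then 0 else esymm n (l - 1) lam

/-- The Gårding cone `Γ_k`. -/
def GammaK (n k : ℕ) : Set (Fin n → ℝ) :=
  {lam | ∀ j, 1 ≤ j → j ≤ k → 0 < esymm n j lam}

/-- `G^{jj} = ∂(σ_k/σ_l)/∂λ_j`. -/
noncomputable def Gjj (n k l : ℕ) (lam : Fin n → ℝ) (j : Fin n) : ℝ :=
  (esymm n (k - 1) (Function.update lam j 0) * esymm n l lam
      - esymm n k lam * esymmPred n l (Function.update lam j 0)) / (esymm n l lam) ^ 2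

/-- `F^{ii} = θ Σ_j G^{jj} − μ G^{ii}`. -/
noncomputable def Fii (n k l : ℕ) (θ μ : ℝ) (lam : Fin n → ℝ) (i : Fin n) : ℝ :=
  θ * ∑ j, Gjj n k l lam j - μ * Gjj n k l lam i

/-- Gradient vector of `u` at `x`. -/
noncomputable def pgrad (n : ℕ) (u : (Fin n → ℝ) → ℝ) (x : Fin n → ℝ) : Fin n → ℝ :=
  fun i => fderiv ℝ u x (Pi.single i 1)

/-- Hessian matrix of `u` at `x`. -/
noncomputable def hessMat (n : ℕ) (u : (Fin n → ℝ) → ℝ) (x : Fin n → ℝ) :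
    Matrix (Fin n) (Fin n) ℝ :=
  Matrix.of fun i j => iteratedFDeriv ℝ 2 u x ![Pi.single i 1, Pi.single j 1]

/-- Hessian matrix of `u` at `x` computed with derivatives within `s`. -/
noncomputable def hessMatWithin (n : ℕ) (u : (Fin n → ℝ) → ℝ) (s : Set (Fin n → ℝ))
    (x : Fin n → ℝ) : Matrix (Fin n) (Fin n) ℝ :=
  Matrix.of fun i j => iteratedFDerivWithin ℝ 2 u s x ![Pi.single i 1, Pi.single j 1]

/-- `η[u] = (Δu) I − D²u`. -/
noncomputable def etaMat (n : ℕ) (u : (Fin n → ℝ) → ℝ) (x : Fin n → ℝ) :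
    Matrix (Fin n) (Fin n) ℝ :=
  Matrix.trace (hessMat n u x) • (1 : Matrix (Fin n) (Fin n) ℝ) - hessMat n u x

/-- Euclidean ball in `Fin n → ℝ`. -/
def EBall (n : ℕ) (c : Fin n → ℝ) (r : ℝ) : Set (Fin n → ℝ) :=
  {x | ∑ i, (x i - c i) ^ 2 < r ^ 2}

/-- `W = √(1+|Du|²)`. -/
noncomputable def Wgraph (n : ℕ) (u : (Fin n → ℝ) → ℝ) (x : Fin n → ℝ) : ℝ :=
  Real.sqrt (1 + ∑ i, (pgrad n u x i) ^ 2)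

/-- Matrix similar to `A = W⁻¹ g^{-1/2} D²u g^{-1/2}`, namely `W⁻¹ g⁻¹ D²u`. -/
noncomputable def shapeMat (n : ℕ) (u : (Fin n → ℝ) → ℝ) (x : Fin n → ℝ) :
    Matrix (Fin n) (Fin n) ℝ :=
  (Wgraph n u x)⁻¹ •
    ((1 + Matrix.vecMulVec (pgrad n u x) (pgrad n u x))⁻¹ * hessMat n u x)

lemma esymm_zero' (n : ℕ) (κ : Fin n → ℝ) : esymm n 0 κ = 1 := by
  simp [esymm]

lemma sum_esymm_update' (n m : ℕ) (κ : Fin n → ℝ) :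
    ∑ j, esymm n m (Function.update κ j 0) = ((n : ℝ) - m) * esymm n m κ := by
  unfold esymm
  rw [Finset.sum_comm, Finset.mul_sum]
  apply Finset.sum_congr rfl
  intro s hs
  have hsc : s.card = m := (Finset.mem_powersetCard.mp hs).2
  have hmn : m ≤ n := by
    have := Finset.card_le_univ s
    simpa [hsc] using this
  have h1 : ∀ j : Fin n, (∏ i ∈ s, Function.update κ j 0 i)
      = if j ∈ s then 0 else ∏ i ∈ s, κ i := by
    intro j
    by_cases hj : j ∈ s
    · rw [if_pos hj]
      exact Finset.prod_eq_zero hj (Function.update_self j 0 κ)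
    · rw [if_neg hj]
      exact Finset.prod_congr rfl fun i hi =>
        Function.update_of_ne (by rintro rfl; exact hj hi) 0 κ
  rw [Finset.sum_congr rfl fun j _ => h1 j]
  rw [Finset.sum_ite, Finset.sum_const_zero, zero_add, Finset.sum_const]
  have hcard : (Finset.univ.filter (fun j => ¬ j ∈ s)).card = n - m := by
    rw [Finset.filter_not, Finset.filter_mem_eq_inter, Finset.univ_inter]
    rw [Finset.card_sdiff_of_subset (Finset.subset_univ s), Finset.card_univ, Fintype.card_fin, hsc]
  rw [hcard, nsmul_eq_mul, Nat.cast_sub hmn]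


theorem stmt17 (n k : ℕ) (hk1 : 1 ≤ k) (hkn : k ≤ n)
    (κ : Fin n → ℝ) (hκ : κ ∈ GammaK n k) :
    (∑ i, Gjj n k (k - 1) κ i ≤ (n : ℝ) - (k : ℝ) + 1) ∧
    (((n : ℝ) - (k : ℝ) + 1) * (esymm n (k - 1) κ) ^ 2
        - ((n : ℝ) - (k : ℝ) + 2) * esymm n k κ * esymmPred n (k - 1) κ)
      / (esymm n (k - 1) κ) ^ 2 ≤ (n : ℝ) - (k : ℝ) + 1 := by
  have hA : 0 < esymm n (k - 1) κ := by
    rcases Nat.lt_or_ge 1 k with h | h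
    · exact hκ (k - 1) (by omega) (by omega)
    · have : k = 1 := le_antisymm h hk1
      subst this
      simp [esymm_zero']
  have hB : 0 < esymm n k κ := hκ k hk1 le_rfl
  have hC : 0 ≤ esymmPred n (k - 1) κ := by
    unfold esymmPred
    split
    · exact le_refl 0
    · by_cases h2 : k = 2
      · subst h2; simp [esymm_zero']
      · exact le_of_lt (hκ (k - 1 - 1) (by omega) (by omega))
  have hnk : (k : ℝ) ≤ (n : ℝ) := by exact_mod_cast hkn
  have hsecond : (((n : ℝ) - (k : ℝ) + 1) * (esymm n (k - 1) κ) ^ 2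
        - ((n : ℝ) - (k : ℝ) + 2) * esymm n k κ * esymmPred n (k - 1) κ)
      / (esymm n (k - 1) κ) ^ 2 ≤ (n : ℝ) - (k : ℝ) + 1 := by
    rw [div_le_iff₀ (by positivity)]
    nlinarith [mul_nonneg (mul_nonneg (by linarith : (0:ℝ) ≤ (n:ℝ) - k + 2) hB.le) hC]
  refine ⟨?_, hsecond⟩
  by_cases hk1' : k = 1
  · subst hk1'
    have h1 : ∀ i : Fin n, Gjj n 1 0 κ i = 1 := by
      intro i
      simp [Gjj, esymmPred, esymm_zero']
    rw [Finset.sum_congr rfl fun i _ => h1 i, Finset.sum_const, Finset.card_univ,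
      Fintype.card_fin, nsmul_eq_mul, mul_one]
    norm_num
  · have hk2 : 2 ≤ k := by omega
    have hCeq : esymmPred n (k - 1) κ = esymm n (k - 2) κ := by
      unfold esymmPred
      rw [if_neg (by omega)]
      congr 1
    have hGjj : ∀ i, Gjj n k (k - 1) κ i
        = (esymm n (k - 1) (Function.update κ i 0) * esymm n (k - 1) κ
            - esymm n k κ * esymm n (k - 2) (Function.update κ i 0))
          / (esymm n (k - 1) κ) ^ 2 := by
      intro i
      unfold Gjj esymmPred
      rw [if_neg (by omega), show k - 1 - 1 = k - 2 from rfl]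
    have hsum : ∑ i, Gjj n k (k - 1) κ i
        = (((n : ℝ) - (k : ℝ) + 1) * (esymm n (k - 1) κ) ^ 2
            - ((n : ℝ) - (k : ℝ) + 2) * esymm n k κ * esymmPred n (k - 1) κ)
          / (esymm n (k - 1) κ) ^ 2 := by
      rw [Finset.sum_congr rfl fun i _ => hGjj i, ← Finset.sum_div]
      congr 1
      rw [Finset.sum_sub_distrib, ← Finset.sum_mul, ← Finset.mul_sum,
        sum_esymm_update', sum_esymm_update', hCeq,
        Nat.cast_sub hk1, Nat.cast_sub hk2]
      push_cast
      ring
    rw [hsum]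
    exact hsecond
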